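/- With f as above, the directed graph on Fin (2p) with edge set {(v, f(v)) : v ∈ Fin (2p)} is strongly connected if and only if the parity of x is odd. -/

import Mathlib

/-!
Write vertex `2 i + b` as the pair `(i, b)`, so that `f (i, b) = (i + 1, b + xᵢ)`. The level
`b + x₀ + ⋯ + x_{i-1} (mod 2)` is preserved by every step except the wrap-around
`p - 1 ↦ 0`, where it changes by the parity of `x`. For even parity the level is an invariant
separating `0` from `1`. For odd parity `i + p · level` is an injection into `ZMod (2p)`
conjugating `f` to `· + 1`, so `f` is a single cycle.
-/

open Relation Finset

theorem Relation.ReflTransGen.eq_of_invariant {α β : Type*} {f : α → α} {φ : α → β}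
    {u v : α} (hφ : ∀ a, φ (f a) = φ a) (h : ReflTransGen (fun a b => f a = b) u v) : φ u = φ v := by
  induction h with
  | refl => rfl
  | tail _ hbc ih => rw [ih, ← hbc, hφ]

theorem Relation.reflTransGen_iterate {α : Type*} (f : α → α) (u : α) (k : ℕ) :
    ReflTransGen (fun a b => f a = b) u (f^[k] u) := by
  induction k with
  | zero => exact .refl
  | succ k ih => exact ih.tail (Function.iterate_succ_apply' f k u).symm

theorem Function.Injective.reflTransGen_of_semiconj_add_one {α : Type*} {n : ℕ} [NeZero n]
    {f : α → α} {e : α → ZMod n} (he : Function.Injective e)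
    (hfe : Function.Semiconj e f (· + 1)) (u v : α) :
    ReflTransGen (fun a b => f a = b) u v := by
  have hk : e (f^[(e v - e u).val] u) = e v := by
    rw [(hfe.iterate_right _).eq, add_right_iterate_apply, nsmul_one, ZMod.natCast_zmod_val,
      add_sub_cancel]
  exact he hk ▸ reflTransGen_iterate f u _

theorem Nat.two_mul_add_mod_two_mul {t : ℕ} (m p : ℕ) (ht : t < 2) :
    (2 * m + t) % (2 * p) = 2 * (m % p) + t := by
  rw [Nat.mod_mul, show (2 * m + t) / 2 = m by omega]
  omega

namespace ParityGraph

variable {p : ℕ} (x : Fin p → Bool)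

def IsParityMap (f : Fin (2 * p) → Fin (2 * p)) : Prop :=
  ∀ i : Fin p,
    f ⟨2 * i.val, by have := i.isLt; omega⟩ =
      ⟨(2 * i.val + 2 + (x i).toNat) % (2 * p), Nat.mod_lt _ (by have := i.isLt; omega)⟩ ∧
    f ⟨2 * i.val + 1, by have := i.isLt; omega⟩ =
      ⟨(2 * i.val + 3 - (x i).toNat) % (2 * p), Nat.mod_lt _ (by have := i.isLt; omega)⟩

def bit (j : ℕ) : ℕ := if h : j < p then (x ⟨j, h⟩).toNat else 0

def prefixSum (i : ℕ) : ℕ := ∑ j ∈ range i, bit x j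

def level (n : ℕ) : ℕ := n % 2 + prefixSum x (n / 2)

def rank (n : ℕ) : ZMod (2 * p) := ((n / 2 + level x n * p : ℕ) : ZMod (2 * p))

theorem bit_le_one (j : ℕ) : bit x j ≤ 1 := by
  unfold bit; split_ifs
  · exact Bool.toNat_le _
  · exact zero_le_one

theorem prefixSum_zero : prefixSum x 0 = 0 := rfl

theorem prefixSum_succ (i : ℕ) : prefixSum x (i + 1) = prefixSum x i + bit x i :=
  sum_range_succ _ _

theorem prefixSum_self : prefixSum x p = ∑ i, (x i).toNat := by
  rw [prefixSum, ← Fin.sum_univ_eq_sum_range]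
  exact Fintype.sum_congr _ _ fun i => dif_pos i.isLt

theorem rank_injective : Function.Injective fun v : Fin (2 * p) => rank x v := by
  intro v w h
  simp only [rank, ZMod.natCast_eq_natCast_iff] at h
  have hv := v.isLt
  have hw := w.isLt
  have hp : 0 < p := by omega
  have hdiv : (v : ℕ) / 2 = w / 2 := by
    have hmod : (v : ℕ) / 2 ≡ w / 2 [MOD p] := by
      simpa [Nat.ModEq, Nat.add_mul_mod_self_right] using h.of_mul_left 2
    exact hmod.eq_of_lt_of_lt (by omega) (by omega)
  rw [hdiv] at h
  have hlev := Nat.ModEq.mul_right_cancel' hp.ne' (Nat.ModEq.add_left_cancel' _ h)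
  unfold level Nat.ModEq at hlev
  rw [hdiv] at hlev
  exact Fin.ext (by omega)

variable {x} {f : Fin (2 * p) → Fin (2 * p)}

theorem val_apply (hf : IsParityMap x f) (v : Fin (2 * p)) :
    (f v : ℕ) = 2 * ((v / 2 + 1) % p) + (v % 2 + bit x (v / 2)) % 2 := by
  have hi : (v : ℕ) / 2 < p := by omega
  have hbit : bit x (v / 2) = (x ⟨v / 2, hi⟩).toNat := dif_pos hi
  have hle := Bool.toNat_le (x ⟨v / 2, hi⟩)
  have hfv : (f v : ℕ) = (2 * (v / 2 + 1) + (v % 2 + bit x (v / 2)) % 2) % (2 * p) := by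
    rcases Nat.mod_two_eq_zero_or_one v with hb | hb
    · have h := congrArg Fin.val (hf ⟨v / 2, hi⟩).1
      rw [show (⟨2 * (v / 2), _⟩ : Fin (2 * p)) = v from Fin.ext (by simp; omega)] at h
      simp only [h]; congr 1; omega
    · have h := congrArg Fin.val (hf ⟨v / 2, hi⟩).2
      rw [show (⟨2 * (v / 2) + 1, _⟩ : Fin (2 * p)) = v from Fin.ext (by simp; omega)] at h
      simp only [h]; congr 1; omega
  rw [hfv, Nat.two_mul_add_mod_two_mul _ _ (Nat.mod_lt _ two_pos)]

theorem level_apply_modEq (hf : IsParityMap x f) (v : Fin (2 * p)) :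
    level x (f v) ≡
      level x v + if (v : ℕ) / 2 + 1 = p then ∑ i, (x i).toNat else 0 [MOD 2] := by
  have hfv := val_apply hf v
  have hbit := bit_le_one x (v / 2)
  unfold level Nat.ModEq
  split_ifs with hwrap
  · have hS : prefixSum x p = prefixSum x (v / 2) + bit x (v / 2) := by
      rw [← prefixSum_succ, hwrap]
    rw [hwrap, Nat.mod_self] at hfv
    rw [← prefixSum_self, hS, show (f v : ℕ) / 2 = 0 by omega, prefixSum_zero]
    omega
  · rw [Nat.mod_eq_of_lt (by omega)] at hfv
    rw [show (f v : ℕ) / 2 = v / 2 + 1 by omega, prefixSum_succ]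
    omega

theorem level_apply_modEq_of_even (hf : IsParityMap x f) (hS : (∑ i, (x i).toNat) % 2 = 0)
    (v : Fin (2 * p)) : level x (f v) ≡ level x v [MOD 2] := by
  have h := level_apply_modEq hf v
  split_ifs at h
  · unfold Nat.ModEq at *; omega
  · exact h

theorem rank_apply (hf : IsParityMap x f) (hS : (∑ i, (x i).toNat) % 2 = 1)
    (v : Fin (2 * p)) : rank x (f v) = rank x v + 1 := by
  have hlev := level_apply_modEq hf v
  have hfv := val_apply hf v
  rw [rank, rank, ← Nat.cast_add_one, ZMod.natCast_eq_natCast_iff]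
  split_ifs at hlev with hwrap
  · have hlev' : level x (f v) * p ≡ (level x v + 1) * p [MOD 2 * p] :=
      (hlev.trans (Nat.ModEq.add_left _ (show _ ≡ 1 [MOD 2] from hS))).mul_right' p
    rw [hwrap, Nat.mod_self] at hfv
    rw [show (f v : ℕ) / 2 = 0 by omega, zero_add]
    convert hlev' using 1
    rw [add_mul, one_mul]; omega
  · rw [Nat.mod_eq_of_lt (by omega)] at hfv
    rw [show (f v : ℕ) / 2 = v / 2 + 1 by omega, add_right_comm, add_zero] at *
    exact ((hlev.mul_right' p).add_left _).add_right 1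

end ParityGraph

/-- The functional directed graph of `f(2i) = 2i + 2 + x_i`,
`f(2i+1) = 2i + 3 - x_i` (mod `2p`) is strongly connected iff the parity of
the bit string `x` is odd. -/
theorem parity_graph_strongly_connected_iff (p : ℕ) (hp : 1 ≤ p)
    (x : Fin p → Bool) (f : Fin (2 * p) → Fin (2 * p))
    (hf : ∀ i : Fin p,
      f ⟨2 * i.val, by omega⟩ =
        ⟨(2 * i.val + 2 + (x i).toNat) % (2 * p), Nat.mod_lt _ (by omega)⟩ ∧
      f ⟨2 * i.val + 1, by omega⟩ =
        ⟨(2 * i.val + 3 - (x i).toNat) % (2 * p), Nat.mod_lt _ (by omega)⟩) :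
    (∀ u v : Fin (2 * p), Relation.ReflTransGen (fun a b => f a = b) u v) ↔
      (∑ i, (x i).toNat) % 2 = 1 := by
  constructor
  · intro hconn
    by_contra hS
    have h01 := (hconn ⟨0, by omega⟩ ⟨1, by omega⟩).eq_of_invariant
      (φ := fun v : Fin (2 * p) => ParityGraph.level x v % 2)
      (ParityGraph.level_apply_modEq_of_even hf (by omega))
    simp [ParityGraph.level, ParityGraph.prefixSum_zero] at h01
  · intro hS
    have : NeZero (2 * p) := ⟨by omega⟩
    exact (ParityGraph.rank_injective x).reflTransGen_of_semiconj_add_one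
      (ParityGraph.rank_apply hf hS)
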